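/- For η ∈ ℂ with η ∉ {−2, −4, −6}, define f_η : ℝ² → ℂ by f_η(θ₁, θ₂) = (a(η) + b(η)cos θ₁ + b(η)cos θ₂ + c(η)cos θ₁ cos θ₂)·(4 + η − 2cos θ₁ − 2cos θ₂). There exists a constant C > 0 such that for every η ∈ ℂ with |η| ≤ 1 and every θ in the high-frequency set T^H, |1 − (24/25)·f_η(θ)| ≤ 7/25 + C·|η|. In particular, if the complex shift satisfies λ = O(1/h) (so that η = λh² = O(h)), the local Fourier analysis smoothing factor of the Vanka relaxation with ω = 24/25 for the complex-shifted Laplacian is at most 7/25 + O(h). -/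

import Mathlib

open Real

noncomputable def aη (η : ℂ) : ℂ := (1/4) * (1/(2+η) + 2/(4+η) + 1/(6+η))
noncomputable def bη (η : ℂ) : ℂ := (1/4) * (1/(2+η) - 1/(6+η))
noncomputable def cη (η : ℂ) : ℂ := (1/4) * (1/(2+η) - 2/(4+η) + 1/(6+η))

/-- The high-frequency set `T^H = [−π/2, 3π/2)² \ [−π/2, π/2)²`. -/
def TH : Set (ℝ × ℝ) :=
  (Set.Ico (-(π/2)) (3*π/2) ×ˢ Set.Ico (-(π/2)) (3*π/2)) \
    (Set.Ico (-(π/2)) (π/2) ×ˢ Set.Ico (-(π/2)) (π/2))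

/-- The (scaled) symbol of the Vanka relaxation product `M̃_η L̃_η` with shift `η = λh²`. -/
noncomputable def fη (η : ℂ) (θ : ℝ × ℝ) : ℂ :=
  (aη η + bη η * Real.cos θ.1 + bη η * Real.cos θ.2
    + cη η * (Real.cos θ.1 * Real.cos θ.2)) *
    (4 + η - 2 * Real.cos θ.1 - 2 * Real.cos θ.2)

/-! At `η = 0` the symbol is real: `24 f₀(θ) = (7 + 2x + 2y + xy)(4 − 2x − 2y)` with `x = cos θ₁`,
`y = cos θ₂`. On `T^H` one of the cosines is nonpositive, which pins this polynomial to `[18, 32]`,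
i.e. `f₀ ∈ [3/4, 4/3]`; the damping `ω = 24/25 = 2 / (3/4 + 4/3)` balances the two ends, giving
`|1 − ω f₀| ≤ 7/25`. For `‖η‖ ≤ 1` the denominators `2 + η, 4 + η, 6 + η` stay at distance `≥ 1`
from `0`, so `η ↦ f_η(θ)` is Lipschitz at `0` uniformly in `θ`, which yields the `C ‖η‖` term. -/

def symbolWeight (a b c : ℂ) (x y : ℝ) : ℂ := a + b * x + b * y + c * (x * y)

lemma fη_eq_symbolWeight_mul (η : ℂ) (θ : ℝ × ℝ) :
    fη η θ = symbolWeight (aη η) (bη η) (cη η) (cos θ.1) (cos θ.2) *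
      (4 + η - 2 * cos θ.1 - 2 * cos θ.2) := rfl

lemma symbolWeight_sub (a b c a' b' c' : ℂ) (x y : ℝ) :
    symbolWeight a b c x y - symbolWeight a' b' c' x y =
      symbolWeight (a - a') (b - b') (c - c') x y := by
  unfold symbolWeight; ring

lemma norm_symbolWeight_le (a b c : ℂ) {x y : ℝ} (hx : |x| ≤ 1) (hy : |y| ≤ 1) :
    ‖symbolWeight a b c x y‖ ≤ ‖a‖ + 2 * ‖b‖ + ‖c‖ := by
  calc ‖symbolWeight a b c x y‖
      ≤ ‖a‖ + ‖b‖ * |x| + ‖b‖ * |y| + ‖c‖ * (|x| * |y|) := by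
        refine norm_add₄_le.trans_eq ?_
        simp only [norm_mul, Complex.norm_real, norm_eq_abs]
    _ ≤ ‖a‖ + 2 * ‖b‖ + ‖c‖ := by
        have hxy : |x| * |y| ≤ 1 := mul_le_one₀ hx (abs_nonneg y) hy
        nlinarith [norm_nonneg b, norm_nonneg c]

lemma norm_div_add_sub_div_le (p : ℂ) {c η : ℂ} (hc : 2 ≤ ‖c‖) (hη : ‖η‖ ≤ 1) :
    ‖p / (c + η) - p / c‖ ≤ ‖p‖ * (‖η‖ / 2) := by
  have hcη : 1 ≤ ‖c + η‖ := by
    have := norm_sub_norm_le c (-η)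
    rw [sub_neg_eq_add, norm_neg] at this
    linarith
  have hc0 : c ≠ 0 := norm_pos_iff.mp (by linarith)
  have hcη0 : c + η ≠ 0 := norm_pos_iff.mp (by linarith)
  have key : p / (c + η) - p / c = -(p * η) / (c * (c + η)) := by field_simp; ring
  rw [key, norm_div, norm_neg, norm_mul, norm_mul, mul_div_assoc]
  gcongr
  nlinarith

noncomputable def partialFractions (p q r η : ℂ) : ℂ := p / (2 + η) + q / (4 + η) + r / (6 + η)

lemma aη_eq_partialFractions (η : ℂ) : aη η = partialFractions (1/4) (1/2) (1/4) η := by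
  unfold aη partialFractions; ring

lemma bη_eq_partialFractions (η : ℂ) : bη η = partialFractions (1/4) 0 (-1/4) η := by
  unfold bη partialFractions; ring

lemma cη_eq_partialFractions (η : ℂ) : cη η = partialFractions (1/4) (-1/2) (1/4) η := by
  unfold cη partialFractions; ring

lemma norm_partialFractions_sub_le (p q r : ℂ) {η : ℂ} (hη : ‖η‖ ≤ 1) :
    ‖partialFractions p q r η - partialFractions p q r 0‖ ≤ (‖p‖ + ‖q‖ + ‖r‖) * (‖η‖ / 2) := by
  have e : partialFractions p q r η - partialFractions p q r 0 =
      (p / (2 + η) - p / 2) + (q / (4 + η) - q / 4) + (r / (6 + η) - r / 6) := by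
    simp only [partialFractions, add_zero]; ring
  have h2 := norm_div_add_sub_div_le p (c := 2) (by norm_num) hη
  have h4 := norm_div_add_sub_div_le q (c := 4) (by norm_num) hη
  have h6 := norm_div_add_sub_div_le r (c := 6) (by norm_num) hη
  rw [e]
  refine norm_add₃_le.trans ?_
  linarith

lemma norm_symbolWeight_sub_le {η : ℂ} (hη : ‖η‖ ≤ 1) {x y : ℝ} (hx : |x| ≤ 1) (hy : |y| ≤ 1) :
    ‖symbolWeight (aη η) (bη η) (cη η) x y - symbolWeight (aη 0) (bη 0) (cη 0) x y‖
      ≤ 3 / 2 * ‖η‖ := by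
  rw [symbolWeight_sub]
  refine (norm_symbolWeight_le _ _ _ hx hy).trans ?_
  simp only [aη_eq_partialFractions, bη_eq_partialFractions, cη_eq_partialFractions]
  have ha := norm_partialFractions_sub_le (1/4) (1/2) (1/4) hη
  have hb := norm_partialFractions_sub_le (1/4) 0 (-1/4) hη
  have hc := norm_partialFractions_sub_le (1/4) (-1/2) (1/4) hη
  norm_num at ha hb hc
  linarith

lemma symbolWeight_zero (x y : ℝ) :
    symbolWeight (aη 0) (bη 0) (cη 0) x y = (((7 + 2 * x + 2 * y + x * y) / 24 : ℝ) : ℂ) := by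
  simp only [symbolWeight, aη, bη, cη]; push_cast; ring

lemma norm_symbolWeight_zero_le {x y : ℝ} (hx : |x| ≤ 1) (hy : |y| ≤ 1) :
    ‖symbolWeight (aη 0) (bη 0) (cη 0) x y‖ ≤ 1 / 2 := by
  refine (norm_symbolWeight_le _ _ _ hx hy).trans_eq ?_
  simp only [aη, bη, cη]
  norm_num

lemma norm_fη_sub_fη_zero_le {η : ℂ} (hη : ‖η‖ ≤ 1) (θ : ℝ × ℝ) :
    ‖fη η θ - fη 0 θ‖ ≤ 14 * ‖η‖ := by
  have hx := abs_cos_le_one θ.1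
  have hy := abs_cos_le_one θ.2
  rw [fη_eq_symbolWeight_mul, fη_eq_symbolWeight_mul]
  generalize cos θ.1 = x at hx ⊢
  generalize cos θ.2 = y at hy ⊢
  set W := symbolWeight (aη η) (bη η) (cη η) x y
  set W₀ := symbolWeight (aη 0) (bη 0) (cη 0) x y
  have e : W * (4 + η - 2 * x - 2 * y) - W₀ * (4 + 0 - 2 * x - 2 * y) =
      (W - W₀) * (((4 - 2 * x - 2 * y : ℝ) : ℂ) + η) + W₀ * η := by
    push_cast; ring
  have hQ : ‖((4 - 2 * x - 2 * y : ℝ) : ℂ) + η‖ ≤ 9 := by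
    have : |4 - 2 * x - 2 * y| ≤ 8 := by
      rw [abs_le] at hx hy ⊢; constructor <;> linarith
    refine (norm_add_le _ _).trans ?_
    rw [Complex.norm_real, norm_eq_abs]
    linarith
  calc ‖W * (4 + η - 2 * x - 2 * y) - W₀ * (4 + 0 - 2 * x - 2 * y)‖
      ≤ ‖W - W₀‖ * ‖((4 - 2 * x - 2 * y : ℝ) : ℂ) + η‖ + ‖W₀‖ * ‖η‖ := by
        rw [e, ← norm_mul, ← norm_mul]; exact norm_add_le _ _
    _ ≤ 3 / 2 * ‖η‖ * 9 + 1 / 2 * ‖η‖ := by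
        gcongr
        · exact norm_symbolWeight_sub_le hη hx hy
        · exact norm_symbolWeight_zero_le hx hy
    _ = 14 * ‖η‖ := by ring

lemma vanka_poly_mem_Icc {x y : ℝ} (hx : |x| ≤ 1) (hy : |y| ≤ 1) (hxy : x ≤ 0 ∨ y ≤ 0) :
    (7 + 2 * x + 2 * y + x * y) * (4 - 2 * x - 2 * y) ∈ Set.Icc 18 32 := by
  rw [abs_le] at hx hy
  obtain ⟨hx₁, hx₂⟩ := hx
  obtain ⟨hy₁, hy₂⟩ := hy
  constructor
  · rcases hxy with h | h <;>
      nlinarith [sq_nonneg (x + y), sq_nonneg (x - y), sq_nonneg (x - 1), sq_nonneg (y - 1),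
        mul_nonneg (sub_nonneg.2 hx₂) (sub_nonneg.2 hy₂)]
  · nlinarith [sq_nonneg (x + y), sq_nonneg (x - y),
      mul_nonneg (neg_le_iff_add_nonneg.1 hx₁) (neg_le_iff_add_nonneg.1 hy₁)]

lemma cos_fst_nonpos_or_cos_snd_nonpos_of_mem_TH {θ : ℝ × ℝ} (hθ : θ ∈ TH) :
    cos θ.1 ≤ 0 ∨ cos θ.2 ≤ 0 := by
  obtain ⟨⟨⟨h₁, h₁'⟩, ⟨h₂, h₂'⟩⟩, hlow⟩ := hθ
  by_cases hθ₁ : θ.1 < π / 2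
  · have hθ₂ : π / 2 ≤ θ.2 := not_lt.1 fun hθ₂ => hlow ⟨⟨h₁, hθ₁⟩, ⟨h₂, hθ₂⟩⟩
    exact Or.inr (cos_nonpos_of_pi_div_two_le_of_le hθ₂ (by linarith))
  · exact Or.inl (cos_nonpos_of_pi_div_two_le_of_le (not_lt.1 hθ₁) (by linarith))

lemma norm_one_sub_fη_zero_le {θ : ℝ × ℝ} (hθ : θ ∈ TH) :
    ‖1 - (24 / 25 : ℂ) * fη 0 θ‖ ≤ 7 / 25 := by
  obtain ⟨h₁, h₂⟩ := vanka_poly_mem_Icc (abs_cos_le_one θ.1) (abs_cos_le_one θ.2)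
    (cos_fst_nonpos_or_cos_snd_nonpos_of_mem_TH hθ)
  have e : 1 - (24 / 25 : ℂ) * fη 0 θ = (((25 - (7 + 2 * cos θ.1 + 2 * cos θ.2
      + cos θ.1 * cos θ.2) * (4 - 2 * cos θ.1 - 2 * cos θ.2)) / 25 : ℝ) : ℂ) := by
    rw [fη_eq_symbolWeight_mul, symbolWeight_zero]; push_cast; ring
  rw [e, Complex.norm_real, norm_eq_abs, abs_le]
  constructor <;> linarith

theorem stmt_10 :
    ∃ C > 0, ∀ η : ℂ, ‖η‖ ≤ 1 → ∀ θ ∈ TH,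
      ‖1 - (24/25 : ℂ) * fη η θ‖ ≤ 7/25 + C * ‖η‖ := by
  refine ⟨14, by norm_num, fun η hη θ hθ => ?_⟩
  have e : 1 - (24/25 : ℂ) * fη η θ = (1 - 24/25 * fη 0 θ) - 24/25 * (fη η θ - fη 0 θ) := by ring
  calc ‖1 - (24/25 : ℂ) * fη η θ‖
      ≤ ‖1 - (24/25 : ℂ) * fη 0 θ‖ + 24/25 * ‖fη η θ - fη 0 θ‖ := by
        rw [e]; refine (norm_sub_le _ _).trans_eq ?_; rw [norm_mul]; norm_num
    _ ≤ 7/25 + 24/25 * (14 * ‖η‖) := by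
        gcongr
        · exact norm_one_sub_fη_zero_le hθ
        · exact norm_fη_sub_fη_zero_le hη θ
    _ ≤ 7/25 + 14 * ‖η‖ := by linarith [norm_nonneg η]
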